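/- arXiv:2407.04644 — 3 statements merged into one kernel-verified Lean document; each statement's English description precedes it below -/
import Mathlib

section
/- Let M be a commutative monoid. The space of proper ideals of M, endowed with the coarse lower topology (whose subbasic closed sets are V(J) = { I proper ideal : J ⊆ I } for ideals J of M), is quasi-compact. -/
structure MonoidIdeal (M : Type*) [CommMonoid M] where
  carrier : Set M
  nonempty : carrier.Nonempty
  mul_mem : ∀ i ∈ carrier, ∀ m : M, i * m ∈ carrier

/-- The ideal generated by a subset `A` of a commutative monoid. -/
def genIdeal {M : Type*} [CommMonoid M] (A : Set M) : Set M :=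
  {x | ∃ a ∈ A, ∃ m : M, x = a * m}

/-- The space of proper ideals of a commutative monoid. -/
def ProperIdealSpace (M : Type*) [CommMonoid M] :=
  {I : MonoidIdeal M // I.carrier ≠ Set.univ}

/-- The coarse lower topology on the proper ideals: subbasic closed sets are
the sets `V J = {I proper : J ⊆ I}` for ideals `J`. -/
def lowerTopProper (M : Type*) [CommMonoid M] : TopologicalSpace (ProperIdealSpace M) :=
  .generateFrom {U | ∃ J : MonoidIdeal M, U = {I : ProperIdealSpace M | J.carrier ⊆ I.1.carrier}ᶜ}

/-- The coarse lower topology on all ideals. -/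
def lowerTopAll (M : Type*) [CommMonoid M] : TopologicalSpace (MonoidIdeal M) :=
  .generateFrom {U | ∃ J : MonoidIdeal M, U = {I : MonoidIdeal M | J.carrier ⊆ I.carrier}ᶜ}

/-- A spectral space: quasi-compact, sober, with a basis of quasi-compact
open sets closed under finite intersections. -/
def IsSpectral (X : Type*) [TopologicalSpace X] : Prop :=
  CompactSpace X ∧ QuasiSober X ∧ T0Space X ∧
    ∃ B : Set (Set X), TopologicalSpace.IsTopologicalBasis B ∧
      (∀ U ∈ B, IsCompact U ∧ IsOpen U) ∧ ∀ U ∈ B, ∀ V ∈ B, U ∩ V ∈ B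

/-- An ideal is compact in the lattice of ideals if every cover by a sup of
ideals admits a finite subcover. -/
def IsCompactIdeal {M : Type*} [CommMonoid M] (I : MonoidIdeal M) : Prop :=
  ∀ (Λ : Type) (y : Λ → MonoidIdeal M),
    I.carrier ⊆ genIdeal (⋃ l, (y l).carrier) →
    ∃ F : Finset Λ, I.carrier ⊆ genIdeal (⋃ l ∈ F, (y l).carrier)

theorem stmt9 (M : Type*) [CommMonoid M] :
    @CompactSpace (ProperIdealSpace M) (lowerTopProper M) := by
  letI := lowerTopProper M
  constructor
  rw [isCompact_iff_ultrafilter_le_nhds]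
  intro F _
  have hne : Nonempty (ProperIdealSpace M) := F.nonempty_of_neBot
  -- notation for subbasic closed sets
  set V : MonoidIdeal M → Set (ProperIdealSpace M) :=
    fun J => {I : ProperIdealSpace M | J.carrier ⊆ I.1.carrier} with hV
  have key : ∀ a : ProperIdealSpace M,
      (∀ J : MonoidIdeal M, V J ∈ F → J.carrier ⊆ a.1.carrier) → (F : Filter (ProperIdealSpace M)) ≤ nhds a := by
    intro a ha
    have hn : nhds a = ⨅ s ∈ {s | a ∈ s ∧ s ∈ {U | ∃ J : MonoidIdeal M,
        U = {I : ProperIdealSpace M | J.carrier ⊆ I.1.carrier}ᶜ}}, Filter.principal s :=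
      TopologicalSpace.nhds_generateFrom (g := {U | ∃ J : MonoidIdeal M,
        U = {I : ProperIdealSpace M | J.carrier ⊆ I.1.carrier}ᶜ}) (a := a)
    rw [hn]
    refine le_iInf fun s => le_iInf fun hs => ?_
    obtain ⟨has, J, rfl⟩ := hs
    rw [Filter.le_principal_iff]
    rcases F.mem_or_compl_mem (V J)ᶜ with h | h
    · exact h
    · rw [compl_compl] at h
      exact absurd (ha J h) has
  by_cases hex : ∃ J : MonoidIdeal M, V J ∈ F
  · obtain ⟨J₀, hJ₀⟩ := hex
    set K : Set M := {x | ∃ J : MonoidIdeal M, V J ∈ F ∧ x ∈ J.carrier} with hK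
    have Kideal : MonoidIdeal M :=
      ⟨K, ⟨J₀.nonempty.choose, J₀, hJ₀, J₀.nonempty.choose_spec⟩,
        fun i hi m => by obtain ⟨J, hJF, hiJ⟩ := hi; exact ⟨J, hJF, J.mul_mem i hiJ m⟩⟩
    -- need carrier of Kideal to be K definitionally; construct directly instead
    refine ⟨⟨⟨K, ⟨J₀.nonempty.choose, J₀, hJ₀, J₀.nonempty.choose_spec⟩,
        fun i hi m => by obtain ⟨J, hJF, hiJ⟩ := hi; exact ⟨J, hJF, J.mul_mem i hiJ m⟩⟩, ?_⟩,
      Set.mem_univ _, key _ ?_⟩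
    · -- proper
      intro h
      have h1 : (1 : M) ∈ K := by rw [show K = Set.univ from h]; trivial
      obtain ⟨J, hJF, h1J⟩ := h1
      have hJuniv : J.carrier = Set.univ := by
        ext m; simp only [Set.mem_univ, iff_true]
        have := J.mul_mem 1 h1J m; rwa [one_mul] at this
      have : V J = ∅ := by
        ext I; simp only [Set.mem_empty_iff_false, iff_false, hV, Set.mem_setOf_eq]
        intro hsub
        exact I.2 (Set.eq_univ_of_univ_subset (le_of_eq hJuniv.symm |>.trans hsub))
      rw [this] at hJF
      exact F.neBot.ne (Filter.empty_mem_iff_bot.mp hJF)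
    · intro J hJF x hx
      exact ⟨J, hJF, hx⟩
  · obtain ⟨a⟩ := hne
    exact ⟨a, Set.mem_univ _, key a fun J hJ => absurd ⟨J, hJ⟩ hex⟩
end

section
/- Let L be an algebraic lattice. Then L equipped with the coarse lower topology (whose subbasic closed sets are the principal up-sets ↑x = { y ∈ L : x ≤ y } for x ∈ L) is a spectral space. -/
/-!
In the lower topology every ultrafilter `f` converges to `sSup {b | Ici b ∈ f}`. Because the sets
`b` with `Ici b ∈ f` form a directed family, a compact element below this supremum already has
its `Ici` in `f`; hence the complement of the upper closure of any set of compact elements is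
compact. In an algebraic lattice, each subbasic open set `(Ici x)ᶜ` is the union of the sets
`(Ici c)ᶜ` for compact `c ≤ x`, so the complements of upper closures of finite sets of compact
elements form a basis of compact open sets, stable under intersection. Sobriety holds in every
complete lattice: an irreducible closed set `S` covered by finitely many closed sets `Ici a`
lies in one of them, which forces `sInf S ∈ S`, and then `sInf S` is a generic point of `S`.
-/

open Topology TopologicalSpace Set

theorem IsCompactElement.Ici_mem_of_le_sSup {L : Type*} [CompleteLattice L] {f : Filter L} {c : L}
    (hc : IsCompactElement c) (h : c ≤ sSup {b | Ici b ∈ f}) : Ici c ∈ f := by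
  have hdir : DirectedOn (· ≤ ·) {b | Ici b ∈ f} := fun a ha b hb =>
    ⟨a ⊔ b, by simpa [← Ici_inter_Ici] using Filter.inter_mem ha hb, le_sup_left, le_sup_right⟩
  obtain ⟨b, hb, hcb⟩ := (CompleteLattice.isCompactElement_iff_le_of_directed_sSup_le _ c).1 hc _
    ⟨⊥, by simp⟩ hdir h
  exact Filter.mem_of_superset hb (Ici_subset_Ici.2 hcb)

theorem IsCompactlyGenerated.exists_isCompactElement_le_not_le {L : Type*} [CompleteLattice L]
    [IsCompactlyGenerated L] {x a : L} (h : ¬x ≤ a) :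
    ∃ c, IsCompactElement c ∧ c ≤ x ∧ ¬c ≤ a := by
  simpa [le_iff_compact_le_imp (a := x)] using h

theorem IsIrreducible.exists_subset_Ici_of_subset_upperClosure {α : Type*} [Preorder α]
    [TopologicalSpace α] [ClosedIciTopology α] {S t : Set α} (hS : IsIrreducible S)
    (ht : t.Finite) (h : S ⊆ upperClosure t) : ∃ a ∈ t, S ⊆ Ici a := by
  classical
  obtain ⟨z, hz, hSz⟩ := isIrreducible_iff_sUnion_isClosed.1 hS (ht.image Ici).toFinset
    (by simp [isClosed_Ici]) (by simpa [coe_upperClosure] using h)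
  obtain ⟨a, ha, rfl⟩ := by simpa using hz
  exact ⟨a, ha, hSz⟩

namespace Topology.IsLower

variable {L : Type*} [CompleteLattice L]

variable (L) in
def compactLowerBasis : Set (Set L) :=
  {s | ∃ t : Set L, t.Finite ∧ (∀ c ∈ t, IsCompactElement c) ∧ (upperClosure t : Set L)ᶜ = s}

theorem inter_mem_compactLowerBasis {s t : Set L} (hs : s ∈ compactLowerBasis L)
    (ht : t ∈ compactLowerBasis L) : s ∩ t ∈ compactLowerBasis L := by
  obtain ⟨s, hsf, hsc, rfl⟩ := hs
  obtain ⟨t, htf, htc, rfl⟩ := ht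
  refine ⟨s ∪ t, hsf.union htf, fun c hc => hc.elim (hsc c) (htc c), ?_⟩
  simp [upperClosure_union, compl_union]

variable [TopologicalSpace L] [IsLower L]

theorem ultrafilter_le_nhds_sSup (f : Ultrafilter L) : (f : Filter L) ≤ 𝓝 (sSup {b | Ici b ∈ f}) :=
  Filter.tendsto_id'.1 <| tendsto_nhds_iff_not_le.2 fun _ hb =>
    Ultrafilter.compl_mem_iff_notMem.2 fun h => hb (le_sSup h)

theorem isCompact_compl_upperClosure {S : Set L} (hS : ∀ c ∈ S, IsCompactElement c) :
    IsCompact (upperClosure S : Set L)ᶜ := by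
  refine isCompact_iff_ultrafilter_le_nhds.2 fun f hf => ⟨_, ?_, ultrafilter_le_nhds_sSup f⟩
  rintro ⟨c, hcS, hc⟩
  have hcompl : (Ici c)ᶜ ∈ f :=
    Filter.mem_of_superset (Filter.le_principal_iff.1 hf) fun z hz hcz => hz ⟨c, hcS, hcz⟩
  exact Ultrafilter.compl_mem_iff_notMem.1 hcompl ((hS c hcS).Ici_mem_of_le_sSup hc)

instance : CompactSpace L :=
  ⟨by simpa using isCompact_compl_upperClosure (L := L) (S := ∅) (by simp)⟩

theorem sInf_mem_of_isIrreducible_of_isClosed {S : Set L} (hS : IsIrreducible S)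
    (hScl : IsClosed S) : sInf S ∈ S := by
  by_contra hnot
  obtain ⟨_, ⟨t, ht, rfl⟩, hnt, htS⟩ :=
    IsLower.isTopologicalBasis.exists_subset_of_mem_open hnot hScl.isOpen_compl
  obtain ⟨a, hat, hSa⟩ := hS.exists_subset_Ici_of_subset_upperClosure ht
    fun z hz => by_contra fun hzt => htS hzt hz
  exact hnt ⟨a, hat, le_sInf hSa⟩

instance : QuasiSober L where
  sober {S} hS hScl := by
    have hmem := sInf_mem_of_isIrreducible_of_isClosed hS hScl
    refine ⟨sInf S, ?_⟩
    rw [isGenericPoint_def, closure_singleton]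
    exact (isUpperSet_of_isClosed hScl).Ici_subset hmem |>.antisymm fun _ => sInf_le

theorem isCompact_of_mem_compactLowerBasis {s : Set L} (hs : s ∈ compactLowerBasis L) :
    IsCompact s := by
  obtain ⟨t, -, htc, rfl⟩ := hs
  exact isCompact_compl_upperClosure htc

theorem isOpen_of_mem_compactLowerBasis {s : Set L} (hs : s ∈ compactLowerBasis L) :
    IsOpen s := by
  obtain ⟨t, ht, -, rfl⟩ := hs
  exact (isClosed_upperClosure ht).isOpen_compl

theorem isTopologicalBasis_compactLowerBasis [IsCompactlyGenerated L] :
    IsTopologicalBasis (compactLowerBasis L) := by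
  refine isTopologicalBasis_of_isOpen_of_nhds (fun _ => isOpen_of_mem_compactLowerBasis)
    fun a u ha hu => ?_
  obtain ⟨_, ⟨t, ht, rfl⟩, hat, htu⟩ := IsLower.isTopologicalBasis.exists_subset_of_mem_open ha hu
  have hcompact : ∀ x : t, ∃ c : L, IsCompactElement c ∧ c ≤ x ∧ ¬c ≤ a := fun x =>
    IsCompactlyGenerated.exists_isCompactElement_le_not_le fun hxa => hat ⟨x, x.2, hxa⟩
  choose g hgc hgx hga using hcompact
  have : Finite t := ht.to_subtype
  refine ⟨_, ⟨range g, finite_range g, forall_mem_range.2 hgc, rfl⟩, ?_, ?_⟩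
  · rintro ⟨_, ⟨x, rfl⟩, hxa⟩
    exact hga x hxa
  · refine Subset.trans (compl_subset_compl.2 ?_) htu
    rintro z ⟨x, hx, hxz⟩
    exact ⟨g ⟨x, hx⟩, mem_range_self _, (hgx _).trans hxz⟩

end Topology.IsLower

theorem stmt16 {L : Type*} [CompleteLattice L]
    (halg : ∀ x : L, x = sSup {c | IsCompactElement c ∧ c ≤ x}) :
    @IsSpectral L (.generateFrom {U | ∃ x : L, U = (Set.Ici x)ᶜ}) := by
  let : TopologicalSpace L := .generateFrom {U | ∃ x : L, U = (Set.Ici x)ᶜ}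
  have : IsLower L := ⟨congrArg generateFrom <| ext fun _ => exists_congr fun _ => eq_comm⟩
  have : IsCompactlyGenerated L := ⟨fun x => ⟨_, fun _ hc => hc.1, (halg x).symm⟩⟩
  exact ⟨inferInstance, inferInstance, inferInstance, _,
    IsLower.isTopologicalBasis_compactLowerBasis,
    fun _ hU => ⟨IsLower.isCompact_of_mem_compactLowerBasis hU,
      IsLower.isOpen_of_mem_compactLowerBasis hU⟩,
    fun _ hU _ hV => IsLower.inter_mem_compactLowerBasis hU hV⟩
end

section
/- Let X be a topological space with a subbasis S of closed sets such that every family of members of S with empty intersection has a finite subfamily with empty intersection. Then X is quasi-compact. -/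
theorem stmt19 {X : Type*} [t : TopologicalSpace X] (S : Set (Set X))
    (hsub : t = .generateFrom ((·ᶜ) '' S))
    (h : ∀ F ⊆ S, ⋂₀ F = ∅ → ∃ G ⊆ F, G.Finite ∧ ⋂₀ G = ∅) :
    CompactSpace X := by
  rw [← isCompact_univ_iff, isCompact_iff_ultrafilter_le_nhds]
  intro f _
  set F : Set (Set X) := {s | s ∈ S ∧ s ∈ f} with hF
  have hne : ⋂₀ F ≠ ∅ := by
    intro h0
    obtain ⟨G, hGF, hGfin, hG0⟩ := h F (fun s hs => hs.1) h0
    have : ⋂₀ G ∈ f := (Filter.sInter_mem hGfin).2 fun s hs => (hGF hs).2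
    rw [hG0] at this
    exact f.neBot.ne (Filter.empty_mem_iff_bot.mp this)
  obtain ⟨x, hx⟩ := Set.nonempty_iff_ne_empty.mpr hne
  refine ⟨x, Set.mem_univ x, ?_⟩
  subst hsub; rw [TopologicalSpace.nhds_generateFrom]
  refine le_iInf₂ fun u hu => ?_
  obtain ⟨hxu, s, hs, rfl⟩ := hu
  rw [Filter.le_principal_iff]
  rcases f.mem_or_compl_mem s with hsf | hsf
  · exact absurd (hx s ⟨hs, hsf⟩) hxu
  · exact hsf
end
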